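/- arXiv:1312.4022 — 2 statements merged into one kernel-verified Lean document; each statement's English description precedes it below -/
import Mathlib

section
/- Let R be a nontrivial ring (1 ≠ 0) and n ≥ 2 a natural number. Then the full matrix ring Mₙ(R) of n×n matrices over R is not central linear Armendariz. -/
open Polynomial

/-- A ring `R` is *central linear Armendariz* if whenever the product of two linear
polynomials `(a₀ + a₁x)(b₀ + b₁x) = 0` in `R[x]`, each product `aᵢbⱼ` is central in `R`. -/
def CentralLinearArmendariz (R : Type*) [Ring R] : Prop :=
  ∀ a₀ a₁ b₀ b₁ : R,
    (C a₀ + C a₁ * X) * (C b₀ + C b₁ * X) = 0 →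
      a₀ * b₀ ∈ Set.center R ∧ a₀ * b₁ ∈ Set.center R ∧
      a₁ * b₀ ∈ Set.center R ∧ a₁ * b₁ ∈ Set.center R

theorem Polynomial.linear_mul_linear {S : Type*} [Semiring S] (a₀ a₁ b₀ b₁ : S) :
    (C a₀ + C a₁ * X) * (C b₀ + C b₁ * X) =
      C (a₀ * b₀) + C (a₀ * b₁ + a₁ * b₀) * X + C (a₁ * b₁) * X ^ 2 := by
  simp only [add_mul, mul_add, C_add, C_mul, mul_assoc, X_mul_C, pow_two]
  rw [← mul_assoc X (C b₁), X_mul_C, mul_assoc]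
  abel

namespace Matrix

variable {ι R : Type*} [Fintype ι] [DecidableEq ι] [Ring R] [Nontrivial R]

theorem single_same_one_notMem_center {i j : ι} (hij : i ≠ j) :
    single i i (1 : R) ∉ Set.center (Matrix ι ι R) := by
  intro h
  have hcomm := (Semigroup.mem_center_iff.mp h) (single i j 1)
  rw [single_mul_single_same, single_mul_single_of_ne (h := hij.symm)] at hcomm
  simpa using congrFun (congrFun hcomm i) j

-- `(E_ii + E_ij x)(E_ji - E_ii x) = 0`, yet the product `E_ij E_ji = E_ii` is not central.
theorem not_centralLinearArmendariz_of_ne {i j : ι} (hij : i ≠ j) :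
    ¬ CentralLinearArmendariz (Matrix ι ι R) := by
  intro h
  have hzero : (C (single i i (1 : R)) + C (single i j 1) * X) *
      (C (single j i 1) + C (-single i i 1) * X) = 0 := by
    rw [linear_mul_linear, mul_neg, mul_neg, single_mul_single_of_ne (h := hij),
      single_mul_single_same, single_mul_single_same, single_mul_single_of_ne (h := hij.symm)]
    simp
  have hcen := (h _ _ _ _ hzero).2.2.1
  rw [single_mul_single_same, one_mul] at hcen
  exact single_same_one_notMem_center hij hcen

end Matrix

/-- For a nontrivial ring `R` and `n ≥ 2`, the full matrix ring `Mₙ(R)` is not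
central linear Armendariz. -/
theorem stmt_1 (R : Type*) [Ring R] [Nontrivial R] (n : ℕ) (hn : 2 ≤ n) :
    ¬ CentralLinearArmendariz (Matrix (Fin n) (Fin n) R) :=
  Matrix.not_centralLinearArmendariz_of_ne (i := ⟨0, by omega⟩) (j := ⟨1, hn⟩) (by simp)
end

section
/- Let I be an ideal of a ring R such that I is reduced (i.e., I contains no nonzero nilpotent elements) and the quotient ring R/I is central linear Armendariz. Then R is central linear Armendariz. -/
open Polynomial

/-- A ring `R` is *linear Armendariz* if whenever the product of two linear
polynomials `(a₀ + a₁x)(b₀ + b₁x) = 0` in `R[x]`, each product `aᵢbⱼ` is zero. -/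
def LinearArmendariz (R : Type*) [Ring R] : Prop :=
  ∀ a₀ a₁ b₀ b₁ : R,
    (C a₀ + C a₁ * X) * (C b₀ + C b₁ * X) = 0 →
      a₀ * b₀ = 0 ∧ a₀ * b₁ = 0 ∧ a₁ * b₀ = 0 ∧ a₁ * b₁ = 0

/-- A ring `R` is *Armendariz* if whenever `f g : R[x]` satisfy `f * g = 0`,
every product of a coefficient of `f` with a coefficient of `g` is zero. -/
def Armendariz (R : Type*) [Ring R] : Prop :=
  ∀ f g : R[X], f * g = 0 → ∀ i j : ℕ, f.coeff i * g.coeff j = 0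

/-
From `(a₀ + a₁x)(b₀ + b₁x) = 0` we get `a₀b₀ = 0`, `a₀b₁ = -a₁b₀` and `a₁b₁ = 0`,
so it suffices that `a₁b₀` is central. Modulo `I` it is, so each commutator `c = [a₁b₀, r]` lies
in `I`. As `I` is reduced, `a₀b₀ = 0` gives `b₀ x a₀ = 0` for all `x ∈ I`; writing `c` once via
`a₁b₀` and once via `a₀b₁` shows that `c³` is a sum of terms containing such factors, so `c` is a
nilpotent element of `I`, hence zero.
-/

theorem linear_mul_linear_eq {R : Type*} [Ring R] (a₀ a₁ b₀ b₁ : R) :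
    (C a₀ + C a₁ * X) * (C b₀ + C b₁ * X) =
      C (a₀ * b₀) + C (a₀ * b₁ + a₁ * b₀) * X + C (a₁ * b₁) * X ^ 2 := by
  simp only [add_mul, mul_add, C_add, C_mul, mul_assoc, X_mul_C, pow_two]
  rw [← mul_assoc X, X_mul_C, mul_assoc]
  abel

theorem linear_mul_linear_eq_zero_iff {R : Type*} [Ring R] {a₀ a₁ b₀ b₁ : R} :
    (C a₀ + C a₁ * X) * (C b₀ + C b₁ * X) = 0 ↔
      a₀ * b₀ = 0 ∧ a₀ * b₁ + a₁ * b₀ = 0 ∧ a₁ * b₁ = 0 := by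
  rw [linear_mul_linear_eq]
  refine ⟨fun h => ⟨?_, ?_, ?_⟩, fun ⟨h₀, h₁, h₂⟩ => by simp [h₀, h₁, h₂]⟩
  · simpa using congrArg (coeff · 0) h
  · simpa [-map_mul, coeff_C_mul_X_pow] using congrArg (coeff · 1) h
  · simpa [-map_mul, coeff_C_mul_X_pow] using congrArg (coeff · 2) h

namespace TwoSidedIdeal

variable {R : Type*} [Ring R] {I : TwoSidedIdeal R}

theorem sub_mem_of_mk_mem_center {u : R} (hu : I.ringCon.mk' u ∈ Set.center I.ringCon.Quotient)
    (r : R) : u * r - r * u ∈ I := by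
  rw [← I.rel_iff, ← RingCon.eq]
  simpa using (Semigroup.mem_center_iff.mp hu (I.ringCon.mk' r)).symm

def IsReduced (I : TwoSidedIdeal R) : Prop :=
  ∀ a ∈ I, a * a = 0 → a = 0

namespace IsReduced

theorem eq_zero_of_isNilpotent (hI : I.IsReduced) {c : R} (hc : c ∈ I) (hnil : IsNilpotent c) :
    c = 0 := by
  obtain ⟨n, hn⟩ := hnil
  have step : ∀ k : ℕ, c ^ (k + 2) = 0 → c ^ (k + 1) = 0 := fun k hk =>
    hI _ (pow_succ c k ▸ I.mul_mem_left _ _ hc) <| by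
      rw [← pow_add, show k + 1 + (k + 1) = k + 2 + k by ring, pow_add, hk, zero_mul]
  have descend : ∀ k : ℕ, c ^ (k + 1) = 0 → c = 0 := by
    intro k hk
    induction k with
    | zero => simpa using hk
    | succ k ih => exact ih (step k hk)
  cases n with
  | zero => simpa using congrArg (c * ·) hn
  | succ n => exact descend n hn

theorem mul_mul_eq_zero_of_mul_eq_zero (hI : I.IsReduced) {a b x : R} (hab : a * b = 0)
    (hx : x ∈ I) : b * x * a = 0 :=
  hI _ (I.mul_mem_right _ _ (I.mul_mem_left _ _ hx)) <| by
    rw [show b * x * a * (b * x * a) = b * x * (a * b) * (x * a) by noncomm_ring, hab,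
      mul_zero, zero_mul]

theorem commute_of_commutator_mem (hI : I.IsReduced) {a₀ a₁ b₀ b₁ r : R} (h₀ : a₀ * b₀ = 0)
    (h₁ : a₀ * b₁ + a₁ * b₀ = 0) (hc : a₁ * b₀ * r - r * (a₁ * b₀) ∈ I) :
    Commute (a₁ * b₀) r := by
  set c := a₁ * b₀ * r - r * (a₁ * b₀) with hc_def
  have hc' : c = r * (a₀ * b₁) - a₀ * b₁ * r := by
    rw [hc_def, eq_neg_of_add_eq_zero_left h₁]; noncomm_ring
  have hkill : ∀ x ∈ I, b₀ * x * a₀ = 0 := fun x hx => hI.mul_mul_eq_zero_of_mul_eq_zero h₀ hx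
  have hcube : c * c * c = 0 := by
    calc c * c * c = (a₁ * b₀ * r - r * (a₁ * b₀)) * c * (r * (a₀ * b₁) - a₀ * b₁ * r) := by
          rw [← hc_def, ← hc']
      _ = a₁ * (b₀ * (r * c * r) * a₀) * b₁ - a₁ * (b₀ * (r * c) * a₀) * (b₁ * r)
          - r * a₁ * (b₀ * (c * r) * a₀) * b₁ + r * a₁ * (b₀ * c * a₀) * (b₁ * r) := by
          noncomm_ring
      _ = 0 := by
          rw [hkill _ (I.mul_mem_right _ _ (I.mul_mem_left _ _ hc)),
            hkill _ (I.mul_mem_left _ _ hc), hkill _ (I.mul_mem_right _ _ hc), hkill _ hc]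
          simp
  exact sub_eq_zero.mp (hI.eq_zero_of_isNilpotent hc ⟨3, by rw [pow_three, ← mul_assoc, hcube]⟩)

end IsReduced

end TwoSidedIdeal

/-- If `I` is a reduced (two-sided) ideal of `R` (no nonzero square-zero elements)
and `R/I` is central linear Armendariz, then `R` is central linear Armendariz. -/
theorem stmt_12 (R : Type*) [Ring R] (I : TwoSidedIdeal R)
    (hred : ∀ a ∈ I, a * a = 0 → a = 0)
    (hq : CentralLinearArmendariz I.ringCon.Quotient) :
    CentralLinearArmendariz R := by
  intro a₀ a₁ b₀ b₁ h
  obtain ⟨h₀, h₁, h₂⟩ := linear_mul_linear_eq_zero_iff.mp h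
  obtain ⟨-, -, hq₁₀, -⟩ := hq _ _ _ _ (by simpa using congrArg (map I.ringCon.mk') h)
  have hcenter : a₁ * b₀ ∈ Set.center R := Semigroup.mem_center_iff.mpr fun r =>
    (TwoSidedIdeal.IsReduced.commute_of_commutator_mem hred h₀ h₁
      (TwoSidedIdeal.sub_mem_of_mk_mem_center (by simpa using hq₁₀) r)).eq.symm
  exact ⟨h₀ ▸ Set.zero_mem_center, eq_neg_of_add_eq_zero_left h₁ ▸ Set.neg_mem_center hcenter,
    hcenter, h₂ ▸ Set.zero_mem_center⟩
end
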